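/- arXiv:cs/0603115 — 5 statements merged into one kernel-verified Lean document; each statement's English description precedes it below -/
import Mathlib

section
/- Let p ≥ 2 be an integer, let fl be a round-to-nearest function to F_p, and let a, b ∈ F_p. Define s = a ⊕ b, v = s ⊖ a, and r = (a ⊖ (s ⊖ v)) ⊕ (b ⊖ v). Then s + r = a + b exactly (Knuth's Add12/TwoSum algorithm). -/
/-- `Fp p` is the set of `p`-bit floating-point numbers: reals of the form
`m * 2^e` with `m e : ℤ` and `|m| < 2^p` (unbounded exponent range). -/
def Fp (p : ℕ) : Set ℝ :=
  {x : ℝ | ∃ m e : ℤ, |m| < 2 ^ p ∧ x = (m : ℝ) * 2 ^ e}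

/-- `fl` is a faithful rounding to `Fp p`: it maps into `Fp p`, fixes the
elements of `Fp p`, and `fl x` is either the greatest element of `Fp p`
that is `≤ x` or the least element of `Fp p` that is `≥ x`. -/
def FaithfulRounding (p : ℕ) (fl : ℝ → ℝ) : Prop :=
  (∀ x : ℝ, fl x ∈ Fp p) ∧
  (∀ x ∈ Fp p, fl x = x) ∧
  (∀ x : ℝ, IsGreatest {y | y ∈ Fp p ∧ y ≤ x} (fl x) ∨
            IsLeast {y | y ∈ Fp p ∧ x ≤ y} (fl x))

/-- `fl` is a round-to-nearest to `Fp p`: it maps into `Fp p` and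
`fl x` is at minimal distance from `x` among all elements of `Fp p`. -/
def RoundNearest (p : ℕ) (fl : ℝ → ℝ) : Prop :=
  ∀ x : ℝ, fl x ∈ Fp p ∧ ∀ y ∈ Fp p, |x - fl x| ≤ |x - y|

namespace TwoSumAux

set_option linter.unnecessarySimpa false
set_option linter.unusedSectionVars false

lemma zp (k : ℤ) : (0:ℝ) < 2 ^ k := zpow_pos (by norm_num) k

lemma abs_sub_le' (x y : ℝ) : |x - y| ≤ |x| + |y| := by
  rw [sub_eq_add_neg]
  exact (abs_add_le x (-y)).trans (by rw [abs_neg])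

lemma Fp_zero (p : ℕ) : (0:ℝ) ∈ Fp p :=
  ⟨0, 0, by simpa using pow_pos (by norm_num : (0:ℤ) < 2) p, by simp⟩

lemma Fp_neg {p : ℕ} {x : ℝ} (h : x ∈ Fp p) : -x ∈ Fp p := by
  obtain ⟨m, e, hm, rfl⟩ := h
  exact ⟨-m, e, by simpa using hm, by push_cast; ring⟩

lemma Fp_grid {p : ℕ} (hp : 1 ≤ p) {k : ℤ} {n : ℤ} (hn : |n| ≤ 2 ^ p) :
    (n : ℝ) * 2 ^ k ∈ Fp p := by
  rcases lt_or_eq_of_le hn with h | h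
  · exact ⟨n, k, h, rfl⟩
  · have hpow : (0:ℤ) ≤ 2 ^ p := by positivity
    have hp1 : p - 1 + 1 = p := Nat.succ_pred_eq_of_pos hp
    rcases (abs_eq hpow).mp h with h2 | h2
    · refine ⟨2 ^ (p-1), k+1, ?_, ?_⟩
      · rw [abs_of_nonneg (by positivity)]
        exact pow_lt_pow_right₀ (by norm_num) (by omega)
      · rw [h2, zpow_add₀ (two_ne_zero), ← hp1]
        push_cast
        ring
    · refine ⟨-2 ^ (p-1), k+1, ?_, ?_⟩
      · rw [abs_neg, abs_of_nonneg (by positivity)]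
        exact pow_lt_pow_right₀ (by norm_num) (by omega)
      · rw [h2, zpow_add₀ (two_ne_zero), ← hp1]
        push_cast
        ring

lemma Fp_grid' {p : ℕ} (hp : 1 ≤ p) {k : ℤ} {x : ℝ} {n : ℤ} (hx : x = n * 2 ^ k)
    (hb : |x| ≤ 2 ^ (k + p)) : x ∈ Fp p := by
  refine hx ▸ Fp_grid hp ?_
  have h1 : |(n:ℝ)| * 2 ^ k ≤ 2 ^ (p:ℤ) * 2 ^ k := by
    have : |(n:ℝ)| * 2^k = |x| := by rw [hx, abs_mul, abs_of_pos (zp k)]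
    rw [this, mul_comm]
    rw [zpow_add₀ two_ne_zero] at hb
    linarith [hb]
  have h2 : |(n:ℝ)| ≤ 2 ^ (p:ℤ) := le_of_mul_le_mul_right h1 (zp k)
  rw [zpow_natCast] at h2
  exact_mod_cast h2

lemma rep_bound {p : ℕ} {m e : ℤ} {x : ℝ} (hm : |m| < 2 ^ p) (hx : x = m * 2 ^ e) :
    |x| ≤ 2 ^ (e + p) - 2 ^ e := by
  have hm' : ((|m|:ℤ):ℝ) ≤ ((2 ^ p - 1 : ℤ):ℝ) := by exact_mod_cast (by omega : |m| ≤ 2 ^ p - 1)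
  push_cast at hm'
  rw [hx, abs_mul, abs_of_pos (zp e), zpow_add₀ two_ne_zero, zpow_natCast]
  have h2 := mul_le_mul_of_nonneg_right hm' (zp e).le
  nlinarith [zp e]

section FL

variable {p : ℕ} {fl : ℝ → ℝ} (hp : 1 ≤ p) (hfl : RoundNearest p fl)
include hfl

lemma fl_mem (x : ℝ) : fl x ∈ Fp p := (hfl x).1

lemma fl_near {y : ℝ} (x : ℝ) (hy : y ∈ Fp p) : |x - fl x| ≤ |x - y| := (hfl x).2 y hy

lemma fl_fix {x : ℝ} (hx : x ∈ Fp p) : fl x = x := by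
  have h := (hfl x).2 x hx
  simp only [sub_self, abs_zero] at h
  have := abs_nonpos_iff.mp h
  linarith [this]

include hp

/-- rounding error bound: if `|x| ≤ 2^(k+p)` then `|x - fl x| ≤ 2^(k-1)`. -/
lemma fl_err {k : ℤ} {x : ℝ} (hb : |x| ≤ 2 ^ (k + p)) : |x - fl x| ≤ 2 ^ (k-1) := by
  set n := round (x / 2 ^ k) with hn
  have hr : |x / 2^k - n| ≤ 1/2 := abs_sub_round _
  have hxn : |x - n * 2^k| ≤ 2^(k-1) := by
    have h1 : |x - n * 2^k| = |x/2^k - n| * 2^k := by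
      have e1 : x - n*2^k = (x/2^k - n) * 2^k := by
        rw [sub_mul, div_mul_cancel₀ _ (ne_of_gt (zp k))]
      rw [e1, abs_mul, abs_of_pos (zp k)]
    rw [h1, zpow_sub₀ two_ne_zero]
    calc |x/2^k - n| * 2^k ≤ (1/2) * 2^k := by
          exact mul_le_mul_of_nonneg_right hr (le_of_lt (zp k))
      _ = 2^k / 2^(1:ℤ) := by
          rw [zpow_one]
          ring
  have hnb : |n| ≤ 2 ^ p := by
    have h2 : |(n:ℝ)| < 2 ^ p + 1 := by
      have h3 : |x / 2^k| ≤ 2 ^ (p:ℤ) := by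
        rw [abs_div, abs_of_pos (zp k), div_le_iff₀ (zp k), ← zpow_add₀ two_ne_zero]
        rwa [add_comm] at hb
      have h4 : |(n:ℝ)| ≤ |x/2^k| + 1/2 := by
        have := abs_sub_abs_le_abs_sub (n:ℝ) (x/2^k)
        rw [abs_sub_comm] at hr
        linarith
      rw [zpow_natCast] at h3
      push_cast
      linarith
    have h5 : ((|n| : ℤ) : ℝ) < ((2^p + 1 : ℤ) : ℝ) := by push_cast; simpa using h2
    have := (@Int.cast_lt ℝ _ _ _).mp h5
    omega
  exact le_trans (fl_near hfl x (Fp_grid hp hnb)) hxn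

/-- if `2^(k+p) ≤ |x|` then `2^(k+p) ≤ |fl x|`. -/
lemma fl_big {k : ℤ} {x : ℝ} (hb : 2 ^ (k + p) ≤ |x|) : 2 ^ (k + p) ≤ |fl x| := by
  have hyF : ((2^p : ℤ) : ℝ) * 2 ^ k ∈ Fp p := Fp_grid hp (by simp)
  have hyv : ((2^p : ℤ) : ℝ) * 2 ^ k = 2 ^ (k + p) := by
    rw [zpow_add₀ two_ne_zero]
    push_cast
    rw [zpow_natCast]
    ring
  rcases le_or_gt 0 x with hx | hx
  · have h1 := fl_near hfl x hyF
    rw [hyv] at h1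
    have hxv : x - 2^(k+p) ≥ 0 := by rw [abs_of_nonneg hx] at hb; linarith
    rw [abs_of_nonneg hxv] at h1
    have := abs_sub_abs_le_abs_sub x (fl x)
    rw [abs_of_nonneg hx] at *
    linarith
  · have hyF' : -(((2^p : ℤ) : ℝ) * 2 ^ k) ∈ Fp p := Fp_neg hyF
    have h1 := fl_near hfl x hyF'
    rw [hyv] at h1
    have hxv : x + 2^(k+p) ≤ 0 := by rw [abs_of_neg hx] at hb; linarith
    have h2 : |x - -(2^(k+p))| = -(x + 2^(k+p)) := by
      rw [sub_neg_eq_add, abs_of_nonpos hxv]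
    rw [h2] at h1
    have := abs_sub_abs_le_abs_sub x (fl x)
    rw [abs_of_neg hx] at *
    linarith

end FL

/-- an `Fp p` number of magnitude ≥ `2^(k+p)` is a multiple of `2^(k+1)`. -/
lemma Fp_mult_big {p : ℕ} {k : ℤ} {x : ℝ} (hx : x ∈ Fp p) (hb : 2 ^ (k + p) ≤ |x|) :
    ∃ n : ℤ, x = n * 2 ^ (k+1) := by
  obtain ⟨m, e, hm, rfl⟩ := hx
  have he : k + 1 ≤ e := by
    by_contra hc
    push_neg at hc
    have he' : e ≤ k := by omega
    have h1 : |(m:ℝ)| * 2^e < 2^(p:ℤ) * 2^k := by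
      have hm' : |(m:ℝ)| < 2^(p:ℤ) := by
        rw [zpow_natCast]; exact_mod_cast hm
      have : (2:ℝ)^e ≤ 2^k := zpow_le_zpow_right₀ (by norm_num) he'
      nlinarith [zp e, zp k, abs_nonneg (m:ℝ)]
    rw [abs_mul, abs_of_pos (zp e)] at hb
    rw [zpow_add₀ two_ne_zero, mul_comm ((2:ℝ)^k)] at hb
    linarith
  refine ⟨m * 2 ^ (e - (k+1)).toNat, ?_⟩
  have h2 : (2:ℝ) ^ e = 2 ^ (e - (k+1)) * 2 ^ (k+1) := by
    rw [← zpow_add₀ two_ne_zero]; congr 1; ring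
  have h3 : ((2:ℝ))^((e-(k+1)).toNat) = (2:ℝ)^(e-(k+1)) := by
    rw [← zpow_natCast]
    congr 1
    omega
  push_cast
  rw [h3, h2]
  ring

/-- `x` is a multiple of `2^k`. -/
def Mul2 (k : ℤ) (x : ℝ) : Prop := ∃ n : ℤ, x = n * 2 ^ k

lemma M_add {k : ℤ} {x y : ℝ} (hx : Mul2 k x) (hy : Mul2 k y) : Mul2 k (x + y) := by
  obtain ⟨n, rfl⟩ := hx; obtain ⟨m, rfl⟩ := hy
  exact ⟨n + m, by push_cast; ring⟩

lemma M_sub {k : ℤ} {x y : ℝ} (hx : Mul2 k x) (hy : Mul2 k y) : Mul2 k (x - y) := by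
  obtain ⟨n, rfl⟩ := hx; obtain ⟨m, rfl⟩ := hy
  exact ⟨n - m, by push_cast; ring⟩

lemma M_congr {k : ℤ} {x y : ℝ} (hx : Mul2 k x) (hxy : y = x) : Mul2 k y := hxy ▸ hx

lemma M_down {k j : ℤ} (h : j ≤ k) {x : ℝ} (hx : Mul2 k x) : Mul2 j x := by
  obtain ⟨n, rfl⟩ := hx
  refine ⟨n * 2 ^ (k - j).toNat, ?_⟩
  have h2 : (2:ℝ) ^ k = 2 ^ (k - j) * 2 ^ j := by
    rw [← zpow_add₀ two_ne_zero]; congr 1; ring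
  have h3 : ((2:ℝ))^((k-j).toNat) = (2:ℝ)^(k-j) := by
    rw [← zpow_natCast]
    congr 1
    omega
  push_cast
  rw [h3, h2]
  ring

/-- a multiple of `2^k` larger than `2^k` in magnitude is at least `2^(k+1)`. -/
lemma M_gap {k : ℤ} {x : ℝ} (hx : Mul2 k x) (h : 2 ^ k < |x|) : 2 ^ (k+1) ≤ |x| := by
  obtain ⟨n, rfl⟩ := hx
  rw [abs_mul, abs_of_pos (zp k)] at *
  have h1 : (1:ℝ) < |(n:ℝ)| := by
    have := zp k
    nlinarith
  have h2 : (2:ℝ) ≤ |(n:ℝ)| := by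
    have : (1:ℤ) < |n| := by exact_mod_cast (by simpa using h1 : (1:ℝ) < |(n:ℝ)|)
    have : (2:ℤ) ≤ |n| := by omega
    exact_mod_cast this
  rw [zpow_add_one₀ two_ne_zero]
  nlinarith [zp k]

lemma M_F {p : ℕ} (hp : 1 ≤ p) {k : ℤ} {x : ℝ} (hm : Mul2 k x) (hb : |x| ≤ 2 ^ (k + p)) :
    x ∈ Fp p := by
  obtain ⟨n, hn⟩ := hm
  exact Fp_grid' hp hn hb

lemma M_fl {p : ℕ} {fl : ℝ → ℝ} (hp : 1 ≤ p) (hfl : RoundNearest p fl) {k : ℤ} {x : ℝ}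
    (hx : Mul2 k x) : Mul2 k (fl x) := by
  obtain ⟨n, hn⟩ := hx
  rcases le_or_gt |x| (2 ^ (k + p)) with h | h
  · exact ⟨n, by rw [fl_fix hfl (Fp_grid' hp hn h)]; exact hn⟩
  · obtain ⟨n', hn'⟩ := Fp_mult_big (fl_mem hfl x) (fl_big hp hfl h.le)
    refine ⟨2 * n', ?_⟩
    rw [hn', zpow_add_one₀ two_ne_zero]
    push_cast
    ring

lemma fl_mono {p : ℕ} {fl : ℝ → ℝ} (hfl : RoundNearest p fl) {x y : ℝ} (h : x ≤ y) :
    fl x ≤ fl y := by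
  by_contra hc
  push_neg at hc
  have h1 := fl_near hfl x (fl_mem hfl y)
  have h2 := fl_near hfl y (fl_mem hfl x)
  have h1' : (x - fl x) * (x - fl x) ≤ (x - fl y) * (x - fl y) := by
    have := mul_self_le_mul_self (abs_nonneg _) h1
    rwa [abs_mul_abs_self, abs_mul_abs_self] at this
  have h2' : (y - fl y) * (y - fl y) ≤ (y - fl x) * (y - fl x) := by
    have := mul_self_le_mul_self (abs_nonneg _) h2
    rwa [abs_mul_abs_self, abs_mul_abs_self] at this
  have hxy : x = y := le_antisymm h (by nlinarith)
  rw [hxy] at hc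
  exact lt_irrefl _ hc

/-- sign/monotonicity argument: if `|a+b-s| ≤ |b|` and `v = fl (s-a)` then `|b - v| ≤ |b|`. -/
lemma sign_arg {p : ℕ} {fl : ℝ → ℝ} (hfl : RoundNearest p fl) {a b s v : ℝ} {mb β : ℤ}
    (hmb : |mb| < 2 ^ p) (hbeq : b = mb * 2 ^ β) (hv : v = fl (s - a))
    (hdd : |a + b - s| ≤ |b|) : |b - v| ≤ |b| := by
  have h2bF : (2:ℝ) * b ∈ Fp p :=
    ⟨mb, β+1, hmb, by rw [hbeq, zpow_add_one₀ two_ne_zero]; ring⟩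
  have h0 : fl 0 = 0 := fl_fix hfl (Fp_zero p)
  have h2b : fl (2*b) = 2*b := fl_fix hfl h2bF
  rcases le_or_gt 0 b with hb0 | hb0
  · have hdd' : |a + b - s| ≤ b := by rwa [abs_of_nonneg hb0] at hdd
    obtain ⟨hL, hR⟩ := abs_le.mp hdd'
    have hw1 : (0:ℝ) ≤ s - a := by linarith
    have hw2 : s - a ≤ 2*b := by linarith
    have hv1 : 0 ≤ v := by
      have := fl_mono hfl hw1
      rw [h0, ← hv] at this
      exact this
    have hv2 : v ≤ 2*b := by
      have := fl_mono hfl hw2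
      rw [h2b, ← hv] at this
      exact this
    rw [abs_of_nonneg hb0, abs_le]
    constructor <;> linarith
  · have hdd' : |a + b - s| ≤ -b := by rwa [abs_of_neg hb0] at hdd
    obtain ⟨hL, hR⟩ := abs_le.mp hdd'
    have hw1 : s - a ≤ 0 := by linarith
    have hw2 : 2*b ≤ s - a := by linarith
    have hv1 : v ≤ 0 := by
      have := fl_mono hfl hw1
      rw [h0, ← hv] at this
      exact this
    have hv2 : 2*b ≤ v := by
      have := fl_mono hfl hw2
      rw [h2b, ← hv] at this
      exact this
    rw [abs_of_neg hb0, abs_le]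
    constructor <;> linarith

end TwoSumAux

open TwoSumAux in
/-- Knuth's Add12/TwoSum algorithm: with round-to-nearest,
`s + r = a + b` exactly. -/
theorem add12_twoSum (p : ℕ) (hp : 2 ≤ p) (fl : ℝ → ℝ) (hfl : RoundNearest p fl)
    (a b : ℝ) (ha : a ∈ Fp p) (hb : b ∈ Fp p)
    (s v r : ℝ)
    (hs : s = fl (a + b))
    (hv : v = fl (s - a))
    (hr : r = fl (fl (a - fl (s - v)) + fl (b - v))) :
    s + r = a + b := by
  have hp1 : 1 ≤ p := by omega
  obtain ⟨ma, α, hma, haeq⟩ := ha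
  obtain ⟨mb, β, hmb, hbeq⟩ := hb
  have haF : a ∈ Fp p := ⟨ma, α, hma, haeq⟩
  have hbF : b ∈ Fp p := ⟨mb, β, hmb, hbeq⟩
  have haA : |a| ≤ 2 ^ (α + p) - 2 ^ α := rep_bound hma haeq
  have hbB : |b| ≤ 2 ^ (β + p) - 2 ^ β := rep_bound hmb hbeq
  have hdda : |a + b - s| ≤ |a| := by
    have h := fl_near hfl (a+b) hbF
    rw [← hs] at h
    have e : a + b - b = a := by ring
    rwa [e] at h
  have hddb : |a + b - s| ≤ |b| := by
    have h := fl_near hfl (a+b) haF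
    rw [← hs] at h
    have e : a + b - a = b := by ring
    rwa [e] at h
  have he2d : |s - a - v| ≤ |a + b - s| := by
    have h := fl_near hfl (s-a) hbF
    rw [← hv] at h
    have e : s - a - b = -(a + b - s) := by ring
    rwa [e, abs_neg] at h
  suffices H : (s - v) ∈ Fp p ∧ (b - v) ∈ Fp p ∧ (a - (s - v)) ∈ Fp p ∧ (a + b - s) ∈ Fp p by
    obtain ⟨H1, H2, H3, H4⟩ := H
    rw [hr, fl_fix hfl H1, fl_fix hfl H3, fl_fix hfl H2]
    have e : (a - (s - v)) + (b - v) = a + b - s := by ring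
    rw [e, fl_fix hfl H4]
    ring
  rcases le_or_gt α β with hab | hba
  · -- CASE α ≤ β
    have Ma : Mul2 α a := ⟨ma, haeq⟩
    have Mb : Mul2 α b := M_down hab ⟨mb, hbeq⟩
    have Ms : Mul2 α s := by
      have := M_fl hp1 hfl (M_add Ma Mb)
      rwa [← hs] at this
    have Md : Mul2 α (a + b - s) := M_sub (M_add Ma Mb) Ms
    have Mw : Mul2 α (s - a) := M_sub Ms Ma
    have Mv : Mul2 α v := by
      have := M_fl hp1 hfl Mw
      rwa [← hv] at this
    have Me2 : Mul2 α (s - a - v) := M_sub Mw Mv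
    have Msv : Mul2 α (s - v) := M_sub Ms Mv
    have Mbv : Mul2 α (b - v) := M_sub Mb Mv
    have hEap : (2:ℝ) ^ (α + 1 + (p:ℤ)) = 2 * 2 ^ (α + (p:ℤ)) := by
      have e : α + 1 + (p:ℤ) = (α + (p:ℤ)) + 1 := by ring
      rw [e, zpow_add_one₀ two_ne_zero]
      ring
    have hE1 : (2:ℝ) ^ (α + 1) = 2 * 2 ^ α := by
      rw [zpow_add_one₀ two_ne_zero]; ring
    have T4 : (a + b - s) ∈ Fp p := M_F hp1 Md (by linarith [zp α])
    have T3 : (a - (s - v)) ∈ Fp p := by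
      refine M_F hp1 (M_congr (M_sub Mv Mw) (by ring)) ?_
      have e : a - (s - v) = -(s - a - v) := by ring
      rw [e, abs_neg]
      linarith [zp α]
    by_cases he2s : |s - a - v| ≤ 2 ^ α
    · refine ⟨?_, ?_, T3, T4⟩
      · refine M_F hp1 Msv ?_
        have e : s - v = a + (s - a - v) := by ring
        rw [e]
        calc |a + (s - a - v)| ≤ |a| + |s - a - v| := abs_add_le _ _
          _ ≤ 2 ^ (α + (p:ℤ)) := by linarith
      · refine M_F hp1 Mbv ?_
        have e : b - v = (a + b - s) + (s - a - v) := by ring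
        rw [e]
        calc |(a + b - s) + (s - a - v)| ≤ |a + b - s| + |s - a - v| := abs_add_le _ _
          _ ≤ 2 ^ (α + (p:ℤ)) := by linarith
    · push_neg at he2s
      have hgap : 2 ^ (α + 1) ≤ |s - a - v| := M_gap Me2 he2s
      have hwbig : 2 ^ (α + 1 + (p:ℤ)) < |s - a| := by
        by_contra hc
        push_neg at hc
        have herr := fl_err hp1 hfl (k := α + 1) hc
        rw [← hv] at herr
        have e : α + 1 - 1 = α := by ring
        rw [e] at herr
        exact absurd herr (not_le.mpr he2s)
      have he2a : |s - a - v| ≤ |a| := he2d.trans hdda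
      have hsF : s ∈ Fp p := by rw [hs]; exact fl_mem hfl _
      have hvF : v ∈ Fp p := by rw [hv]; exact fl_mem hfl _
      have hsbig : 2 ^ (α + (p:ℤ)) ≤ |s| := by
        have h1 : |s - a| ≤ |s| + |a| := abs_sub_le' s a
        rw [hEap] at hwbig
        linarith [zp α]
      have hvbig : 2 ^ (α + (p:ℤ)) ≤ |v| := by
        have h1 : |s - a| ≤ |v| + |s - a - v| := by
          have h0 := abs_add_le v (s - a - v)
          have e : v + (s - a - v) = s - a := by ring
          rwa [e] at h0
        rw [hEap] at hwbig
        linarith [zp α]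
      have Ms1 : Mul2 (α + 1) s := Fp_mult_big hsF hsbig
      have Mv1 : Mul2 (α + 1) v := Fp_mult_big hvF hvbig
      refine ⟨?_, ?_, T3, T4⟩
      · refine M_F hp1 (M_sub Ms1 Mv1) ?_
        have e : s - v = a + (s - a - v) := by ring
        rw [e, hEap]
        calc |a + (s - a - v)| ≤ |a| + |s - a - v| := abs_add_le _ _
          _ ≤ 2 * 2 ^ (α + (p:ℤ)) := by linarith [zp α]
      · rcases lt_or_eq_of_le hab with hlt | heq
        · have Mb1 : Mul2 (α + 1) b := M_down (by omega) ⟨mb, hbeq⟩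
          refine M_F hp1 (M_sub Mb1 Mv1) ?_
          have e : b - v = (a + b - s) + (s - a - v) := by ring
          rw [e, hEap]
          calc |(a + b - s) + (s - a - v)| ≤ |a + b - s| + |s - a - v| := abs_add_le _ _
            _ ≤ 2 * 2 ^ (α + (p:ℤ)) := by linarith [zp α]
        · have hsgn : |b - v| ≤ |b| := sign_arg hfl hmb hbeq hv hddb
          refine M_F hp1 Mbv ?_
          rw [← heq] at hbB
          linarith [zp α]
  · -- CASE β < α
    have Mb : Mul2 β b := ⟨mb, hbeq⟩
    have Ma : Mul2 β a := M_down hba.le ⟨ma, haeq⟩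
    have Mab : Mul2 β (a + b) := M_add Ma Mb
    have Ms : Mul2 β s := by
      have := M_fl hp1 hfl Mab
      rwa [← hs] at this
    have Md : Mul2 β (a + b - s) := M_sub Mab Ms
    have Mw : Mul2 β (s - a) := M_sub Ms Ma
    have Mv : Mul2 β v := by
      have := M_fl hp1 hfl Mw
      rwa [← hv] at this
    have T4 : (a + b - s) ∈ Fp p := M_F hp1 Md (by linarith [zp β])
    have T3 : (a - (s - v)) ∈ Fp p := by
      refine M_F hp1 (M_congr (M_sub Mv Mw) (by ring)) ?_
      have e : a - (s - v) = -(s - a - v) := by ring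
      rw [e, abs_neg]
      linarith [zp β]
    have hEbp : (2:ℝ) ^ (β + 1 + (p:ℤ)) = 2 * 2 ^ (β + (p:ℤ)) := by
      have e : β + 1 + (p:ℤ) = (β + (p:ℤ)) + 1 := by ring
      rw [e, zpow_add_one₀ two_ne_zero]
      ring
    have hv' : v = s - a := by
      by_cases habF : a + b ∈ Fp p
      · have hs0 : s = a + b := by rw [hs, fl_fix hfl habF]
        have hz : |a + b - s| = 0 := by rw [hs0]; simp
        have h1 : |s - a - v| ≤ 0 := by linarith [he2d]
        have h2 : s - a - v = 0 := by
          have := abs_nonpos_iff.mp h1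
          exact this
        linarith
      · have habs : 2 ^ (β + (p:ℤ)) < |a + b| := by
          by_contra hc
          push_neg at hc
          obtain ⟨n, hn⟩ := Mab
          exact habF (Fp_grid' hp1 hn hc)
        have hsbig : 2 ^ (β + (p:ℤ)) ≤ |s| := by
          rw [hs]
          exact fl_big hp1 hfl habs.le
        have hsF : s ∈ Fp p := by rw [hs]; exact fl_mem hfl _
        have Ms1 : Mul2 (β + 1) s := Fp_mult_big hsF hsbig
        have Ma1 : Mul2 (β + 1) a := M_down (by omega) ⟨ma, haeq⟩
        have Mw1 : Mul2 (β + 1) (s - a) := M_sub Ms1 Ma1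
        have hwb : |s - a| ≤ 2 ^ (β + 1 + (p:ℤ)) := by
          have e : s - a = b - (a + b - s) := by ring
          have h1 : |s - a| ≤ |b| + |a + b - s| := by
            rw [e]
            exact abs_sub_le' _ _
          rw [hEbp]
          linarith [zp β]
        obtain ⟨n, hn⟩ := Mw1
        have hwF : s - a ∈ Fp p := Fp_grid' hp1 hn hwb
        rw [hv, fl_fix hfl hwF]
    refine ⟨?_, ?_, T3, T4⟩
    · have e : s - v = a := by rw [hv']; ring
      rw [e]
      exact haF
    · have e : b - v = a + b - s := by rw [hv']; ring
      rw [e]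
      exact T4
end

section
/- Let p ≥ 2 be an integer, let fl be a round-to-nearest function to F_p, and let a, b ∈ F_p with |a| ≥ |b|. Define s = a ⊕ b and r = b ⊖ (s ⊖ a). Then s + r = a + b exactly (Dekker's Fast2Sum, the one-test variant of Add12). -/
namespace Fast2SumAux

lemma two_zpow_pos (e : ℤ) : (0:ℝ) < 2 ^ e := zpow_pos (by norm_num) e

lemma zpow_lt_imp {u v : ℤ} (h : (2:ℝ) ^ u < 2 ^ v) : u < v := by
  by_contra hc
  push_neg at hc
  have := zpow_le_zpow_right₀ (by norm_num : (1:ℝ) ≤ 2) hc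
  linarith

lemma one_lt_two_pow_int {p : ℕ} (hp : 1 ≤ p) : (1:ℤ) < 2 ^ p := by
  calc (1:ℤ) < 2 ^ 1 := by norm_num
    _ ≤ 2 ^ p := pow_le_pow_right₀ (by norm_num) hp

lemma mem_of_int (p : ℕ) (hp : 1 ≤ p) (k u : ℤ) (hk : |k| ≤ 2 ^ p) :
    ((k:ℝ) * 2 ^ u) ∈ Fp p := by
  rcases lt_or_eq_of_le hk with h | h
  · exact ⟨k, u, h, rfl⟩
  · have hsplit := (abs_eq (by positivity : (0:ℤ) ≤ 2 ^ p)).mp h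
    have hzz : ((2:ℝ)) ^ (u + (p:ℤ)) = 2 ^ u * 2 ^ p := by
      rw [zpow_add₀ (by norm_num : (2:ℝ) ≠ 0), zpow_natCast]
    rcases hsplit with h1 | h1
    · refine ⟨1, u + p, by simpa using one_lt_two_pow_int hp, ?_⟩
      rw [h1]; push_cast; rw [hzz]; ring
    · refine ⟨-1, u + p, by simpa using one_lt_two_pow_int hp, ?_⟩
      rw [h1]; push_cast; rw [hzz]; ring

lemma mem_of_mul (p : ℕ) (hp : 1 ≤ p) {x : ℝ} {u : ℤ}
    (hx : ∃ k : ℤ, x = (k:ℝ) * 2 ^ u) (hle : |x| ≤ 2 ^ (u + (p:ℤ))) : x ∈ Fp p := by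
  obtain ⟨k, rfl⟩ := hx
  apply mem_of_int p hp k u
  have h2 : (0:ℝ) < 2 ^ u := two_zpow_pos u
  rw [abs_mul, abs_of_pos h2] at hle
  have hzz : ((2:ℝ)) ^ (u + (p:ℤ)) = 2 ^ p * 2 ^ u := by
    rw [zpow_add₀ (by norm_num : (2:ℝ) ≠ 0), zpow_natCast]; ring
  rw [hzz] at hle
  have hk : |(k:ℝ)| ≤ 2 ^ p := le_of_mul_le_mul_right hle h2
  exact_mod_cast hk

lemma fl_fix {p : ℕ} {fl : ℝ → ℝ} (hfl : RoundNearest p fl) {x : ℝ} (hx : x ∈ Fp p) :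
    fl x = x := by
  have h := (hfl x).2 x hx
  have h0 : |x - fl x| ≤ 0 := by simpa using h
  have := abs_eq_zero.mp (le_antisymm h0 (abs_nonneg _))
  linarith

lemma mul_of_big {p : ℕ} {x : ℝ} (hx : x ∈ Fp p) (v : ℤ)
    (h : (2:ℝ) ^ (v + (p:ℤ) - 1) ≤ |x|) : ∃ k : ℤ, x = (k:ℝ) * 2 ^ v := by
  obtain ⟨m, e, hm, rfl⟩ := hx
  rcases eq_or_ne m 0 with rfl | hm0
  · exact ⟨0, by simp⟩
  · have h2e : (0:ℝ) < 2 ^ e := two_zpow_pos e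
    have hmr : |(m:ℝ)| < 2 ^ p := by exact_mod_cast hm
    have hxlt : |(m:ℝ) * 2 ^ e| < 2 ^ (e + (p:ℤ)) := by
      rw [abs_mul, abs_of_pos h2e]
      calc |(m:ℝ)| * 2 ^ e < 2 ^ p * 2 ^ e := by
            exact mul_lt_mul_of_pos_right hmr h2e
        _ = 2 ^ (e + (p:ℤ)) := by
            rw [zpow_add₀ (by norm_num : (2:ℝ) ≠ 0), zpow_natCast]; ring
    have hlt : (2:ℝ) ^ (v + (p:ℤ) - 1) < 2 ^ (e + (p:ℤ)) := lt_of_le_of_lt h hxlt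
    have hve : v ≤ e := by have := zpow_lt_imp hlt; omega
    set d : ℕ := (e - v).toNat with hdd
    have he : (2:ℝ) ^ e = 2 ^ v * 2 ^ d := by
      rw [← zpow_natCast (2:ℝ) d, ← zpow_add₀ (by norm_num : (2:ℝ) ≠ 0)]
      congr 1
      omega
    refine ⟨m * 2 ^ d, ?_⟩
    push_cast
    rw [he]
    ring

lemma err_le {p : ℕ} {fl : ℝ → ℝ} (hfl : RoundNearest p fl) (hp : 1 ≤ p) (x : ℝ) (E : ℤ)
    (h : |x| ≤ 2 ^ (E + (p:ℤ))) : |x - fl x| ≤ 2 ^ (E - 1) := by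
  have h2 : (0:ℝ) < 2 ^ E := two_zpow_pos E
  set k : ℤ := round (x / 2 ^ E) with hk
  have h1 : |x / 2 ^ E - k| ≤ 1 / 2 := abs_sub_round _
  have hEm : (2:ℝ) ^ (E - 1) = 2 ^ E * (1 / 2) := by
    rw [zpow_sub₀ (by norm_num : (2:ℝ) ≠ 0), zpow_one]; ring
  have hEp : (2:ℝ) ^ (E + (p:ℤ)) = 2 ^ p * 2 ^ E := by
    rw [zpow_add₀ (by norm_num : (2:ℝ) ≠ 0), zpow_natCast]; ring
  have hxz : |x - (k:ℝ) * 2 ^ E| ≤ 2 ^ (E - 1) := by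
    have heq : x - (k:ℝ) * 2 ^ E = (x / 2 ^ E - k) * 2 ^ E := by field_simp
    rw [heq, abs_mul, abs_of_pos h2, hEm]
    calc |x / 2 ^ E - (k:ℝ)| * 2 ^ E ≤ (1 / 2) * 2 ^ E :=
          mul_le_mul_of_nonneg_right h1 h2.le
      _ = 2 ^ E * (1 / 2) := by ring
  have hkF : ((k:ℝ) * 2 ^ E) ∈ Fp p := by
    apply mem_of_int p hp
    have ht : |(k:ℝ) * 2 ^ E| ≤ |x| + 2 ^ (E - 1) := by
      have h3 := abs_sub_le ((k:ℝ) * 2 ^ E) x 0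
      simp only [sub_zero] at h3
      have h4 : |(k:ℝ) * 2 ^ E - x| = |x - (k:ℝ) * 2 ^ E| := abs_sub_comm _ _
      linarith [hxz, h3, h4.le, h4.ge]
    rw [abs_mul, abs_of_pos h2] at ht
    have hkr : |(k:ℝ)| ≤ 2 ^ p + 1 / 2 := by
      have : |(k:ℝ)| * 2 ^ E ≤ (2 ^ p + 1 / 2) * 2 ^ E := by
        rw [hEm] at ht
        rw [hEp] at h
        nlinarith
      exact le_of_mul_le_mul_right this h2
    have hki : (|k| : ℝ) < 2 ^ p + 1 := by
      push_cast
      calc |(k:ℝ)| ≤ 2 ^ p + 1 / 2 := hkr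
        _ < 2 ^ p + 1 := by norm_num
    have : |k| < 2 ^ p + 1 := by exact_mod_cast hki
    omega
  have := (hfl x).2 _ hkF
  linarith [hxz]

lemma grid {p : ℕ} {fl : ℝ → ℝ} (hp : 1 ≤ p) (hfl : RoundNearest p fl) {x : ℝ} {u : ℤ}
    (hx : ∃ k : ℤ, x = (k:ℝ) * 2 ^ u) : ∃ k : ℤ, fl x = (k:ℝ) * 2 ^ u := by
  by_cases h : |x| ≤ 2 ^ (u + (p:ℤ))
  · rw [fl_fix hfl (mem_of_mul p hp hx h)]; exact hx
  · push_neg at h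
    have hone : |(1:ℤ)| ≤ 2 ^ p := by
      simp only [abs_one]
      exact (one_lt_two_pow_int hp).le
    have honeg : |(-1:ℤ)| ≤ 2 ^ p := by
      simp only [abs_neg, abs_one]
      exact (one_lt_two_pow_int hp).le
    have hposF : ((2:ℝ) ^ (u + (p:ℤ))) ∈ Fp p := by
      have := mem_of_int p hp 1 (u + p) hone
      simpa using this
    have hnegF : (-(2:ℝ) ^ (u + (p:ℤ))) ∈ Fp p := by
      have := mem_of_int p hp (-1) (u + p) honeg
      simpa using this
    have key : (2:ℝ) ^ (u + (p:ℤ)) ≤ |fl x| := by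
      rcases le_or_gt 0 x with hx1 | hx1
      · have hxv : |x| = x := abs_of_nonneg hx1
        have h5 := (hfl x).2 _ hposF
        have h6 : |x - 2 ^ (u + (p:ℤ))| = |x| - 2 ^ (u + (p:ℤ)) := by
          rw [abs_of_nonneg (by rw [← hxv] at *; linarith [h.le])]
          rw [hxv]
        have h7 := abs_sub_abs_le_abs_sub x (fl x)
        linarith [h5, h6.le, h6.ge, h7]
      · have hxv : |x| = -x := abs_of_neg hx1
        have h5 := (hfl x).2 _ hnegF
        have h6 : |x - (-(2:ℝ) ^ (u + (p:ℤ)))| = |x| - 2 ^ (u + (p:ℤ)) := by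
          have : x - (-(2:ℝ) ^ (u + (p:ℤ))) = -(|x| - 2 ^ (u + (p:ℤ))) := by
            rw [hxv]; ring
          rw [this, abs_neg, abs_of_nonneg (by linarith [h.le])]
        have h7 := abs_sub_abs_le_abs_sub x (fl x)
        linarith [h5, h6.le, h6.ge, h7]
    have key2 : (2:ℝ) ^ ((u + 1) + (p:ℤ) - 1) ≤ |fl x| := by
      rw [show (u + 1) + (p:ℤ) - 1 = u + (p:ℤ) from by ring]
      exact key
    obtain ⟨k, hk⟩ := mul_of_big (hfl x).1 (u + 1) key2
    refine ⟨2 * k, ?_⟩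
    rw [hk, zpow_add₀ (by norm_num : (2:ℝ) ≠ 0) u 1]
    push_cast
    ring

lemma zero_mem (p : ℕ) : (0:ℝ) ∈ Fp p := ⟨0, 0, by positivity, by simp⟩

lemma norm_rep {p : ℕ} (hp : 1 ≤ p) {x : ℝ} (hx : x ∈ Fp p) (hx0 : x ≠ 0) :
    ∃ m e : ℤ, 2 ^ (p - 1) ≤ |m| ∧ |m| < 2 ^ p ∧ x = (m:ℝ) * 2 ^ e := by
  obtain ⟨m, e, hm, rfl⟩ := hx
  have hm0 : m ≠ 0 := by
    rintro rfl
    simp at hx0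
  set n := m.natAbs with hn
  have habsn : |m| = (n:ℤ) := Int.abs_eq_natAbs m
  have hn0 : n ≠ 0 := Int.natAbs_ne_zero.mpr hm0
  have hnlt : n < 2 ^ p := by
    have : (n:ℤ) < 2 ^ p := by rw [← habsn]; exact hm
    exact_mod_cast this
  set L := Nat.log 2 n with hL
  have hL1 : 2 ^ L ≤ n := Nat.pow_log_le_self 2 hn0
  have hL2 : n < 2 ^ (L + 1) := Nat.lt_pow_succ_log_self (by norm_num) n
  have hLp : L + 1 ≤ p := by
    have h1 : (2:ℕ) ^ L < 2 ^ p := lt_of_le_of_lt hL1 hnlt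
    have := (Nat.pow_lt_pow_iff_right (by norm_num : 1 < 2)).mp h1
    omega
  set j := p - 1 - L with hj
  have hj1 : L + j = p - 1 := by omega
  have hj2 : L + 1 + j = p := by omega
  have h2j : |(2:ℤ) ^ j| = 2 ^ j := abs_of_nonneg (by positivity)
  refine ⟨m * 2 ^ j, e - j, ?_, ?_, ?_⟩
  · rw [abs_mul, h2j, habsn]
    have : (2:ℕ) ^ (p - 1) ≤ n * 2 ^ j := by
      calc (2:ℕ) ^ (p - 1) = 2 ^ L * 2 ^ j := by rw [← pow_add, hj1]
        _ ≤ n * 2 ^ j := Nat.mul_le_mul_right _ hL1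
    exact_mod_cast this
  · rw [abs_mul, h2j, habsn]
    have : n * 2 ^ j < 2 ^ p := by
      calc n * 2 ^ j < 2 ^ (L + 1) * 2 ^ j := (Nat.mul_lt_mul_right (by positivity)).mpr hL2
        _ = 2 ^ p := by rw [← pow_add, hj2]
    exact_mod_cast this
  · push_cast
    rw [mul_assoc, ← zpow_natCast (2:ℝ) j, ← zpow_add₀ (by norm_num : (2:ℝ) ≠ 0),
      show (j:ℤ) + (e - (j:ℤ)) = e from by ring]

lemma key (p : ℕ) (hp : 2 ≤ p) (fl : ℝ → ℝ) (hfl : RoundNearest p fl)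
    (a b : ℝ) (ha : a ∈ Fp p) (hb : b ∈ Fp p) (hab : |b| ≤ |a|) :
    (fl (a + b) - a) ∈ Fp p ∧ (a + b - fl (a + b)) ∈ Fp p := by
  have hp1 : 1 ≤ p := by omega
  rcases eq_or_ne b 0 with rfl | hb0
  · have hfa : fl (a + 0) = a := by rw [add_zero]; exact fl_fix hfl ha
    rw [hfa]
    constructor
    · simpa using zero_mem p
    · simpa using zero_mem p
  · obtain ⟨mb, u, hmb1, hmb2, hbeq⟩ := norm_rep hp1 hb hb0
    set s := fl (a + b) with hs
    have h2u : (0:ℝ) < 2 ^ u := two_zpow_pos u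
    have hup : (2:ℝ) ^ (u + (p:ℤ)) = 2 ^ p * 2 ^ u := by
      rw [zpow_add₀ (by norm_num : (2:ℝ) ≠ 0), zpow_natCast]; ring
    have hblow : (2:ℝ) ^ (u + (p:ℤ) - 1) ≤ |b| := by
      rw [hbeq, abs_mul, abs_of_pos h2u]
      have e1 : u + (p:ℤ) - 1 = ((p - 1 : ℕ) : ℤ) + u := by omega
      rw [e1, zpow_add₀ (by norm_num : (2:ℝ) ≠ 0), zpow_natCast]
      have hcast : ((2:ℝ)) ^ (p - 1 : ℕ) ≤ |(mb:ℝ)| := by exact_mod_cast hmb1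
      exact mul_le_mul_of_nonneg_right hcast h2u.le
    have hbup' : |b| ≤ ((2:ℝ) ^ p - 1) * 2 ^ u := by
      rw [hbeq, abs_mul, abs_of_pos h2u]
      have hmbr : |(mb:ℝ)| ≤ 2 ^ p - 1 := by
        have h1 : |mb| ≤ 2 ^ p - 1 := by omega
        have : (|mb| : ℝ) ≤ ((2:ℤ) ^ p - 1 : ℤ) := by exact_mod_cast h1
        push_cast at this
        exact this
      exact mul_le_mul_of_nonneg_right hmbr h2u.le
    have hbup : |b| < 2 ^ (u + (p:ℤ)) := by
      rw [hup]
      nlinarith [hbup', h2u]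
    have hamul : ∃ k : ℤ, a = (k:ℝ) * 2 ^ u := mul_of_big ha u (le_trans hblow hab)
    have habmul : ∃ k : ℤ, a + b = (k:ℝ) * 2 ^ u := by
      obtain ⟨k1, h1⟩ := hamul
      exact ⟨k1 + mb, by rw [h1, hbeq]; push_cast; ring⟩
    have hsmul : ∃ k : ℤ, s = (k:ℝ) * 2 ^ u := grid hp1 hfl habmul
    have herrb : |a + b - s| ≤ |b| := by
      have := (hfl (a + b)).2 a ha
      simpa using this
    have hemul : ∃ k : ℤ, a + b - s = (k:ℝ) * 2 ^ u := by
      obtain ⟨k1, h1⟩ := habmul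
      obtain ⟨k2, h2⟩ := hsmul
      exact ⟨k1 - k2, by rw [h1, h2]; push_cast; ring⟩
    have hsecond : (a + b - s) ∈ Fp p :=
      mem_of_mul p hp1 hemul (le_trans herrb hbup.le)
    refine ⟨?_, hsecond⟩
    have habs : |s - a| ≤ |b| + |a + b - s| := by
      have h' := abs_add_le b (-(a + b - s))
      rw [abs_neg] at h'
      have he : b + -(a + b - s) = s - a := by ring
      rwa [he] at h'
    by_cases hcase : |a + b| ≤ 2 ^ ((u + 1) + (p:ℤ))
    · have herr : |a + b - s| ≤ 2 ^ u := by
        have h1 := err_le hfl hp1 (a + b) (u + 1) hcase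
        rwa [show u + 1 - 1 = u from by ring] at h1
      have htmul : ∃ k : ℤ, s - a = (k:ℝ) * 2 ^ u := by
        obtain ⟨k1, h1⟩ := hsmul
        obtain ⟨k2, h2⟩ := hamul
        exact ⟨k1 - k2, by rw [h1, h2]; push_cast; ring⟩
      apply mem_of_mul p hp1 htmul
      rw [hup]
      nlinarith [hbup', herr, habs]
    · push_neg at hcase
      have e3 : (2:ℝ) ^ ((u + 1) + (p:ℤ)) = 2 * 2 ^ (u + (p:ℤ)) := by
        rw [show (u + 1) + (p:ℤ) = 1 + (u + (p:ℤ)) from by ring,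
          zpow_add₀ (by norm_num : (2:ℝ) ≠ 0), zpow_one]
      rw [e3] at hcase
      have hage : (2:ℝ) ^ (u + (p:ℤ)) < |a| := by
        have h1 := abs_add_le a b
        linarith [hbup]
      have hsge : (2:ℝ) ^ (u + (p:ℤ)) < |s| := by
        have h4 : |a + b| - |s| ≤ |a + b - s| := abs_sub_abs_le_abs_sub _ _
        linarith [herrb, hbup]
      have hamul2 : ∃ k : ℤ, a = (k:ℝ) * 2 ^ (u + 1) := by
        apply mul_of_big ha (u + 1)
        rw [show (u + 1) + (p:ℤ) - 1 = u + (p:ℤ) from by ring]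
        exact hage.le
      have hsmul2 : ∃ k : ℤ, s = (k:ℝ) * 2 ^ (u + 1) := by
        apply mul_of_big (hfl (a + b)).1 (u + 1)
        rw [show (u + 1) + (p:ℤ) - 1 = u + (p:ℤ) from by ring]
        exact hsge.le
      have htmul : ∃ k : ℤ, s - a = (k:ℝ) * 2 ^ (u + 1) := by
        obtain ⟨k1, h1⟩ := hsmul2
        obtain ⟨k2, h2⟩ := hamul2
        exact ⟨k1 - k2, by rw [h1, h2]; push_cast; ring⟩
      apply mem_of_mul p hp1 htmul
      rw [show (u + 1) + (p:ℤ) = 1 + (u + (p:ℤ)) from by ring,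
        zpow_add₀ (by norm_num : (2:ℝ) ≠ 0), zpow_one]
      linarith [habs, herrb, hbup]

end Fast2SumAux

/-- Dekker's Fast2Sum: with round-to-nearest and `|a| ≥ |b|`,
`s + r = a + b` exactly. -/
theorem fast2Sum (p : ℕ) (hp : 2 ≤ p) (fl : ℝ → ℝ) (hfl : RoundNearest p fl)
    (a b : ℝ) (ha : a ∈ Fp p) (hb : b ∈ Fp p) (hab : |b| ≤ |a|)
    (s r : ℝ)
    (hs : s = fl (a + b))
    (hr : r = fl (b - fl (s - a))) :
    s + r = a + b := by
  subst hs
  obtain ⟨h1, h2⟩ := Fast2SumAux.key p hp fl hfl a b ha hb hab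
  rw [Fast2SumAux.fl_fix hfl h1] at hr
  rw [show b - (fl (a + b) - a) = a + b - fl (a + b) from by ring] at hr
  rw [Fast2SumAux.fl_fix hfl h2] at hr
  rw [hr]
  ring
end

section
/- Let p ≥ 2 be an integer, let fl be a round-to-nearest function to F_p, and let a, b ∈ F_p. Then the rounding error of the hardware addition is itself representable: (a + b) − fl(a + b) ∈ F_p. -/
open AddSubgroup

section Fp

variable {p : ℕ} {x : ℝ}

lemma mem_Fp_iff : x ∈ Fp p ↔ ∃ e : ℤ, x ∈ zmultiples ((2 : ℝ) ^ e) ∧ |x| < 2 ^ p * 2 ^ e := by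
  simp only [Fp, Set.mem_ofPred_eq, mem_zmultiples_iff, zsmul_eq_mul]
  constructor
  · rintro ⟨m, e, hm, rfl⟩
    refine ⟨e, ⟨m, rfl⟩, ?_⟩
    rw [abs_mul, abs_zpow, abs_two]
    gcongr
    exact_mod_cast hm
  · rintro ⟨e, ⟨m, rfl⟩, hx⟩
    rw [abs_mul, abs_zpow, abs_two] at hx
    exact ⟨m, e, by exact_mod_cast lt_of_mul_lt_mul_right hx (zpow_pos two_pos e).le, rfl⟩

lemma neg_mem_Fp (hx : x ∈ Fp p) : -x ∈ Fp p := by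
  obtain ⟨m, e, hm, rfl⟩ := hx
  exact ⟨-m, e, by rwa [abs_neg], by push_cast; ring⟩

lemma two_zpow_mem_Fp (hp : 0 < p) (e : ℤ) : (2 : ℝ) ^ e ∈ Fp p :=
  ⟨1, e, by rw [abs_one]; exact one_lt_pow₀ one_lt_two hp.ne', by simp⟩

lemma zmultiples_two_zpow_le {e f : ℤ} (h : e ≤ f) :
    zmultiples ((2 : ℝ) ^ f) ≤ zmultiples ((2 : ℝ) ^ e) := by
  obtain ⟨k, rfl⟩ := Int.le.dest h
  refine zmultiples_le_of_mem ⟨2 ^ k, ?_⟩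
  dsimp only
  rw [zsmul_eq_mul, zpow_add₀ two_ne_zero, zpow_natCast]
  push_cast
  ring

lemma mem_zmultiples_of_mem_Fp_of_le_abs {E : ℤ} (hx : x ∈ Fp p) (h : 2 ^ p * 2 ^ E ≤ |x|) :
    x ∈ zmultiples ((2 : ℝ) ^ E) := by
  obtain ⟨f, hxf, hlt⟩ := mem_Fp_iff.1 hx
  have hEf : E < f := (zpow_lt_zpow_iff_right₀ one_lt_two).1 <|
    lt_of_mul_lt_mul_left (h.trans_lt hlt) (by positivity)
  exact zmultiples_two_zpow_le hEf.le hxf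

end Fp

namespace RoundNearest

variable {p : ℕ} {fl : ℝ → ℝ} (hfl : RoundNearest p fl)
include hfl

lemma apply_eq_self {x : ℝ} (hx : x ∈ Fp p) : fl x = x := by
  have h := (hfl x).2 x hx
  rw [sub_self, abs_zero] at h
  linarith [abs_nonpos_iff.1 h]

lemma le_abs_apply {x t : ℝ} (ht : t ∈ Fp p) (htx : t ≤ |x|) : t ≤ |fl x| := by
  obtain ⟨s, hs, hxs⟩ : ∃ s ∈ Fp p, |x - s| = |x| - t := by
    rcases le_total 0 x with hx | hx
    · rw [abs_of_nonneg hx] at htx ⊢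
      exact ⟨t, ht, abs_of_nonneg (by linarith)⟩
    · rw [abs_of_nonpos hx] at htx ⊢
      exact ⟨-t, neg_mem_Fp ht, by rw [abs_of_nonpos (by linarith)]; ring⟩
  have hnear := (hfl x).2 s hs
  linarith [abs_sub_abs_le_abs_sub x (fl x)]

lemma apply_mem_zmultiples (hp : 0 < p) {x : ℝ} {E : ℤ} (hx : x ∈ zmultiples ((2 : ℝ) ^ E)) :
    fl x ∈ zmultiples ((2 : ℝ) ^ E) := by
  rcases lt_or_ge |x| (2 ^ p * 2 ^ E) with hlt | hge
  · rwa [hfl.apply_eq_self (mem_Fp_iff.2 ⟨E, hx, hlt⟩)]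
  · have ht : (2 : ℝ) ^ p * 2 ^ E ∈ Fp p := by
      rw [← zpow_natCast, ← zpow_add₀ two_ne_zero]
      exact two_zpow_mem_Fp hp _
    exact mem_zmultiples_of_mem_Fp_of_le_abs (hfl x).1 (hfl.le_abs_apply ht hge)

lemma abs_add_sub_apply_le {a b : ℝ} (ha : a ∈ Fp p) (hb : b ∈ Fp p) :
    |a + b - fl (a + b)| ≤ min |a| |b| :=
  le_min (by simpa using (hfl (a + b)).2 b hb) (by simpa using (hfl (a + b)).2 a ha)

end RoundNearest

/-- With round-to-nearest, the rounding error of a hardware addition of two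
`p`-bit floats is itself a `p`-bit float. -/
theorem add_error_representable (p : ℕ) (hp : 2 ≤ p)
    (fl : ℝ → ℝ) (hfl : RoundNearest p fl)
    (a b : ℝ) (ha : a ∈ Fp p) (hb : b ∈ Fp p) :
    (a + b) - fl (a + b) ∈ Fp p := by
  obtain ⟨ea, hma, hlta⟩ := mem_Fp_iff.1 ha
  obtain ⟨eb, hmb, hltb⟩ := mem_Fp_iff.1 hb
  set E := min ea eb
  have hsum : a + b ∈ zmultiples ((2 : ℝ) ^ E) :=
    add_mem (zmultiples_two_zpow_le (min_le_left ea eb) hma)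
      (zmultiples_two_zpow_le (min_le_right ea eb) hmb)
  refine mem_Fp_iff.2 ⟨E, sub_mem hsum (hfl.apply_mem_zmultiples (by omega) hsum), ?_⟩
  calc |a + b - fl (a + b)| ≤ min |a| |b| := hfl.abs_add_sub_apply_le ha hb
    _ < 2 ^ p * 2 ^ E := by
      rcases le_total ea eb with h | h
      · rw [show E = ea from min_eq_left h]; exact min_lt_of_left_lt hlta
      · rw [show E = eb from min_eq_right h]; exact min_lt_of_right_lt hltb
end

section
/- Exactness of the last two steps of Dekker's Split algorithm: Let p ≥ 3 be an integer, let fl be a faithful rounding to F_p, let a ∈ F_p, and let s be an integer with p/2 ≤ s ≤ p−1. Define c = (2^s ⊕ 1) ⊗ a, a_big = c ⊖ a, and a_hi = c ⊖ a_big. Then the subtractions on lines 3 and 4 of the algorithm are performed exactly: c − a_big ∈ F_p (so a_hi = c − a_big) and a − a_hi ∈ F_p (so a ⊖ a_hi = a − a_hi). -/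
lemma Fp.neg_mem {p : ℕ} {x : ℝ} (hx : x ∈ Fp p) : -x ∈ Fp p := by
  obtain ⟨m, e, h1, h2⟩ := hx
  exact ⟨-m, e, by simpa using h1, by rw [h2]; push_cast; ring⟩

lemma Fp.scaled_int_mem {p : ℕ} (hp : 1 ≤ p) {k : ℤ} (E : ℤ) (hk : |k| ≤ 2 ^ p) :
    (k : ℝ) * 2 ^ E ∈ Fp p := by
  rcases lt_or_eq_of_le hk with h | h
  · exact ⟨k, E, h, rfl⟩
  · have hk2 : k = 2 ^ p ∨ k = -(2 ^ p) := by
      rcases abs_cases k with ⟨h1, _⟩ | ⟨h1, _⟩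
      · left; omega
      · right; omega
    have hlt : |(2:ℤ) ^ (p - 1)| < 2 ^ p := by
      rw [abs_of_nonneg (by positivity)]
      exact pow_lt_pow_right₀ one_lt_two (by omega)
    have hps : (2:ℝ) ^ p = 2 ^ (p - 1) * 2 := by
      conv_lhs => rw [show p = (p - 1) + 1 by omega]
      rw [pow_succ]
    have hE : (2:ℝ) ^ (E + 1) = 2 ^ E * 2 := by
      rw [zpow_add_one₀ two_ne_zero]
    rcases hk2 with rfl | rfl
    · refine ⟨2 ^ (p - 1), E + 1, hlt, ?_⟩
      push_cast
      rw [hE, hps]; ring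
    · refine ⟨-(2 ^ (p - 1)), E + 1, by simpa using hlt, ?_⟩
      push_cast
      rw [hE, hps]; ring

lemma Fp.pow2_mem {p : ℕ} (hp : 1 ≤ p) (E : ℤ) : (2:ℝ) ^ E ∈ Fp p := by
  have h1 : |(1:ℤ)| ≤ 2 ^ p := by
    rw [abs_one]
    have : (2:ℤ) ^ 0 ≤ 2 ^ p := pow_le_pow_right₀ one_le_two (Nat.zero_le p)
    simpa using this
  have := Fp.scaled_int_mem (k := 1) hp E h1
  simpa using this

lemma Fp.isMultiple {p : ℕ} {x : ℝ} (hx : x ∈ Fp p) (E : ℤ)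
    (h : (2:ℝ) ^ (E + p - 1) ≤ |x|) : ∃ k : ℤ, x = (k : ℝ) * 2 ^ E := by
  obtain ⟨m, e, h1, h2⟩ := hx
  rcases le_or_gt E e with he | he
  · refine ⟨m * 2 ^ (e - E).toNat, ?_⟩
    rw [h2]; push_cast
    rw [← zpow_natCast (2:ℝ) (e - E).toNat, Int.toNat_of_nonneg (by omega),
        mul_assoc, ← zpow_add₀ two_ne_zero]
    rw [show e - E + E = e by ring]
  · exfalso
    have h3 : |x| = |(m:ℝ)| * 2 ^ e := by
      rw [h2, abs_mul, abs_of_nonneg (by positivity : (0:ℝ) ≤ 2 ^ e)]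
    have h4 : |(m:ℝ)| < 2 ^ p := by
      rw [← Int.cast_abs]; exact_mod_cast h1
    have h5 : (2:ℝ) ^ e ≤ 2 ^ (E - 1) := by
      exact zpow_le_zpow_right₀ (one_le_two : (1:ℝ) ≤ 2) (by omega)
    have h6 : (2:ℝ) ^ (E + p - 1) = 2 ^ p * 2 ^ (E - 1) := by
      rw [← zpow_natCast (2:ℝ) p, ← zpow_add₀ two_ne_zero]
      congr 1; ring
    nlinarith [zpow_pos (show (0:ℝ) < 2 by norm_num) e, zpow_pos (show (0:ℝ) < 2 by norm_num) (E - 1), abs_nonneg ((m:ℝ))]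

lemma sandwich {p : ℕ} {fl : ℝ → ℝ} (hfl : FaithfulRounding p fl)
    {A B x : ℝ} (hA : A ∈ Fp p) (hB : B ∈ Fp p) (hAx : A ≤ x) (hxB : x ≤ B) :
    A ≤ fl x ∧ fl x ≤ B := by
  rcases hfl.2.2 x with h | h
  · exact ⟨h.2 ⟨hA, hAx⟩, le_trans h.1.2 hxB⟩
  · exact ⟨le_trans hAx h.1.2, h.2 ⟨hB, hxB⟩⟩

lemma abs_lb {p : ℕ} {fl : ℝ → ℝ} (hfl : FaithfulRounding p fl)
    {x y B0 : ℝ} (hy : y ∈ Fp p) (hy0 : 0 ≤ y) (hyx : y ≤ |x|)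
    (hxB : |x| ≤ B0) (hB : B0 ∈ Fp p) : y ≤ |fl x| := by
  rcases le_or_gt 0 x with hx | hx
  · rw [abs_of_nonneg hx] at hyx hxB
    obtain ⟨h1, h2⟩ := sandwich hfl hy hB hyx hxB
    rw [abs_of_nonneg (hy0.trans h1)]
    exact h1
  · rw [abs_of_neg hx] at hyx hxB
    obtain ⟨h1, h2⟩ := sandwich (x := x) hfl (Fp.neg_mem hB) (Fp.neg_mem hy)
      (by linarith) (by linarith)
    rw [abs_of_nonpos (by linarith)]
    linarith

lemma cell {p : ℕ} (hp : 1 ≤ p) {fl : ℝ → ℝ} (hfl : FaithfulRounding p fl)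
    (x : ℝ) (E : ℤ) (hx : |x| ≤ 2 ^ (E + p)) :
    ∃ A B : ℝ, A ≤ x ∧ x ≤ B ∧ B - A ≤ 2 ^ E ∧ A ≤ fl x ∧ fl x ≤ B := by
  have hE : (0:ℝ) < 2 ^ E := by positivity
  have h2p : (2:ℝ) ^ (E + p) = 2 ^ p * 2 ^ E := by
    rw [← zpow_natCast (2:ℝ) p, ← zpow_add₀ two_ne_zero]; congr 1; ring
  set t := x / 2 ^ E with ht
  have htb : |t| ≤ 2 ^ p := by
    rw [abs_div, abs_of_nonneg hE.le, div_le_iff₀ hE]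
    rw [h2p] at hx; linarith
  rw [abs_le] at htb
  have hfb : |⌊t⌋| ≤ 2 ^ p := by
    rw [abs_le]
    constructor
    · exact_mod_cast Int.le_floor.mpr (by push_cast; linarith)
    · have h := (Int.floor_le t).trans htb.2
      exact_mod_cast h
  have hcb : |⌈t⌉| ≤ 2 ^ p := by
    rw [abs_le]
    constructor
    · have h := htb.1.trans (Int.le_ceil t)
      exact_mod_cast h
    · exact_mod_cast Int.ceil_le.mpr (by push_cast; linarith)
  have hxt : x = t * 2 ^ E := by
    rw [ht, div_mul_cancel₀ _ hE.ne']
  have hAx : (⌊t⌋ : ℝ) * 2 ^ E ≤ x := by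
    rw [hxt]; exact mul_le_mul_of_nonneg_right (Int.floor_le t) hE.le
  have hxB : x ≤ (⌈t⌉ : ℝ) * 2 ^ E := by
    rw [hxt]; exact mul_le_mul_of_nonneg_right (Int.le_ceil t) hE.le
  have hgap : (⌈t⌉ : ℝ) * 2 ^ E - (⌊t⌋ : ℝ) * 2 ^ E ≤ 2 ^ E := by
    have h := Int.ceil_le_floor_add_one t
    have h' : (⌈t⌉ : ℝ) ≤ (⌊t⌋ : ℝ) + 1 := by exact_mod_cast h
    nlinarith
  obtain ⟨h1, h2⟩ := sandwich hfl (Fp.scaled_int_mem hp E hfb) (Fp.scaled_int_mem hp E hcb) hAx hxB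
  exact ⟨_, _, hAx, hxB, hgap, h1, h2⟩

lemma int_bound (p : ℕ) {k : ℤ} {t : ℝ} (ht : 0 < t)
    (h : |(k:ℝ)| * t ≤ 2 ^ p * t) : |k| ≤ 2 ^ p := by
  have h2 : |(k:ℝ)| ≤ 2 ^ p := le_of_mul_le_mul_right h ht
  rw [← Int.cast_abs] at h2
  exact_mod_cast h2

lemma Fp.normalize {p : ℕ} (hp : 1 ≤ p) {a : ℝ} (ha : a ∈ Fp p) (h0 : a ≠ 0) :
    ∃ m e : ℤ, (2:ℤ) ^ (p - 1) ≤ |m| ∧ |m| < 2 ^ p ∧ a = (m : ℝ) * 2 ^ e := by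
  obtain ⟨m, e, h1, h2⟩ := ha
  have hm0 : m ≠ 0 := by rintro rfl; simp at h2; exact h0 h2
  set n := m.natAbs with hn
  have hn0 : n ≠ 0 := Int.natAbs_ne_zero.mpr hm0
  have hn2 : n < 2 ^ p := by
    have : ((n:ℤ)) < 2 ^ p := by rw [Int.natCast_natAbs]; exact h1
    exact_mod_cast this
  set L := Nat.log 2 n with hL
  have hL1 : 2 ^ L ≤ n := Nat.pow_log_le_self 2 hn0
  have hL2 : n < 2 ^ (L + 1) := Nat.lt_pow_succ_log_self one_lt_two n
  have hLp : L + 1 ≤ p := by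
    by_contra hcon
    push_neg at hcon
    have : (2:ℕ) ^ p ≤ 2 ^ L := Nat.pow_le_pow_right (by norm_num) (by omega)
    omega
  set K := p - 1 - L with hK
  have e1 : (2:ℕ) ^ L * 2 ^ K = 2 ^ (p - 1) := by rw [← pow_add]; congr 1; omega
  have e2 : (2:ℕ) ^ (L + 1) * 2 ^ K = 2 ^ p := by rw [← pow_add]; congr 1; omega
  have f1 : 2 ^ (p - 1) ≤ n * 2 ^ K := by
    calc (2:ℕ) ^ (p - 1) = 2 ^ L * 2 ^ K := e1.symm
    _ ≤ n * 2 ^ K := Nat.mul_le_mul_right _ hL1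
  have f2 : n * 2 ^ K < 2 ^ p := by
    have hpos : 0 < (2:ℕ) ^ K := Nat.two_pow_pos K
    have h3 : n * 2 ^ K < 2 ^ (L + 1) * 2 ^ K := mul_lt_mul_of_pos_right hL2 hpos
    omega
  have hNA : (m * 2 ^ K).natAbs = n * 2 ^ K := by
    rw [Int.natAbs_mul, Int.natAbs_pow]; rfl
  refine ⟨m * 2 ^ K, e - K, ?_, ?_, ?_⟩
  · rw [Int.abs_eq_natAbs, hNA]
    exact_mod_cast f1
  · rw [Int.abs_eq_natAbs, hNA]
    exact_mod_cast f2
  · rw [h2]; push_cast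
    rw [mul_assoc, ← zpow_natCast (2:ℝ) K, ← zpow_add₀ two_ne_zero]
    rw [show (K:ℤ) + (e - K) = e by ring]

set_option maxHeartbeats 1000000 in
/-- Lines 3 and 4 of Dekker's Split algorithm are exact: `c - a_big` and
`a - a_hi` are representable, hence computed without rounding error. -/
theorem dekker_split_exact_steps (p s : ℕ) (hp : 3 ≤ p)
    (hs1 : p ≤ 2 * s) (hs2 : s ≤ p - 1)
    (fl : ℝ → ℝ) (hfl : FaithfulRounding p fl)
    (a : ℝ) (ha : a ∈ Fp p)
    (c a_big a_hi : ℝ)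
    (hc : c = fl (fl ((2 : ℝ) ^ s + 1) * a))
    (hbig : a_big = fl (c - a))
    (hhi : a_hi = fl (c - a_big)) :
    (c - a_big ∈ Fp p ∧ a_hi = c - a_big) ∧
    (a - a_hi ∈ Fp p ∧ fl (a - a_hi) = a - a_hi) := by
  have hp1 : 1 ≤ p := by omega
  have hs : 2 ≤ s := by omega
  have hsp : s + 1 ≤ p := by omega
  have hmem0 : ((2:ℝ) ^ s + 1) ∈ Fp p := by
    refine ⟨2 ^ s + 1, 0, ?_, by push_cast; rw [zpow_zero]; ring⟩
    have h1 : (2:ℤ) ^ s ≤ 2 ^ (p - 1) := pow_le_pow_right₀ one_le_two (by omega)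
    have h2 : (2:ℤ) ^ (p - 1) + 2 ^ (p - 1) = 2 ^ p := by
      rw [← two_mul, ← pow_succ']; congr 1; omega
    have h3 : (2:ℤ) ^ 1 ≤ 2 ^ (p - 1) := pow_le_pow_right₀ one_le_two (by omega)
    norm_num at h3
    rw [abs_of_nonneg (by positivity)]
    linarith only [h1, h2, h3]
  rw [hfl.2.1 _ hmem0] at hc
  by_cases ha0 : a = 0
  · have h00 : (0:ℝ) ∈ Fp p :=
      ⟨0, 0, by simpa using pow_pos (show (0:ℤ) < 2 by norm_num) p, by simp⟩
    have hfl0 : fl 0 = 0 := hfl.2.1 0 h00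
    subst ha0
    rw [mul_zero, hfl0] at hc
    subst hc
    rw [sub_zero, hfl0] at hbig
    subst hbig
    rw [sub_zero, hfl0] at hhi
    subst hhi
    simp only [sub_zero]
    exact ⟨⟨h00, by trivial⟩, h00, by simp [hfl0]⟩
  obtain ⟨m, e, hm1, hm2, hae⟩ := Fp.normalize hp1 ha ha0
  have hm2' : |m| ≤ 2 ^ p - 1 := by omega
  set w : ℝ := (2:ℝ) ^ e with hwdef
  have hw : (0:ℝ) < w := by rw [hwdef]; positivity
  have hsplit : ∀ j : ℕ, (2:ℝ) ^ (e + (j:ℤ)) = w * 2 ^ j := fun j => by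
    rw [hwdef, zpow_add₀ two_ne_zero, zpow_natCast]
  -- pure power facts
  have hs0 : (0:ℝ) < 2 ^ s := by positivity
  have hp0 : (0:ℝ) < 2 ^ p := by positivity
  have pw1 : (2:ℝ) ^ (s+p+1) = 2 ^ s * 2 ^ p * 2 := by
    rw [pow_add, pow_add, pow_one]
  have pw2 : (2:ℝ) ^ (s+p-1) = 2 ^ s * 2 ^ (p-1) := by rw [← pow_add]; congr 1; omega
  have pw3 : (2:ℝ) ^ (s+p-1) = 2 ^ (p-2) * 2 ^ (s+1) := by rw [← pow_add]; congr 1; omega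
  have pw4 : (2:ℝ) ^ (s+p-2) = 2 ^ (p-3) * 2 ^ (s+1) := by rw [← pow_add]; congr 1; omega
  have pw5 : (2:ℝ) ^ (s+p-1) = 2 ^ (s-1) * 2 ^ p := by rw [← pow_add]; congr 1; omega
  have pw6 : (2:ℝ) ^ (s+1) = 2 ^ (s-1) * 4 := by
    rw [show s+1 = (s-1)+2 by omega, pow_add]; norm_num
  have pw7 : (8:ℝ) ≤ 2 ^ p := by
    calc (8:ℝ) = 2 ^ 3 := by norm_num
    _ ≤ 2 ^ p := pow_le_pow_right₀ one_le_two hp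
  have pw8 : (2:ℝ) ≤ 2 ^ (s-1) := by
    calc (2:ℝ) = 2 ^ 1 := (pow_one 2).symm
    _ ≤ _ := pow_le_pow_right₀ one_le_two (by omega)
  have pw9 : (2:ℝ) ^ (s+1) ≤ 2 ^ p := pow_le_pow_right₀ one_le_two hsp
  have pw0 : (1:ℝ) ≤ 2 ^ (p-3) := by
    simpa using pow_le_pow_right₀ (one_le_two : (1:ℝ) ≤ 2) (Nat.zero_le (p-3))
  have h1p : (1:ℝ) ≤ 2 ^ p := by
    simpa using pow_le_pow_right₀ (one_le_two : (1:ℝ) ≤ 2) (Nat.zero_le p)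
  have h1s : (1:ℝ) ≤ 2 ^ s := by
    simpa using pow_le_pow_right₀ (one_le_two : (1:ℝ) ≤ 2) (Nat.zero_le s)
  -- bounds on a
  have hma : (2:ℝ) ^ (p-1) ≤ |(m:ℝ)| := by rw [← Int.cast_abs]; exact_mod_cast hm1
  have hmb : |(m:ℝ)| ≤ 2 ^ p - 1 := by
    rw [← Int.cast_abs]; exact_mod_cast hm2'
  have habs : |a| = |(m:ℝ)| * w := by rw [hae, abs_mul, abs_of_pos hw]
  have halb : w * 2 ^ (p-1) ≤ |a| := by
    rw [habs]; linarith only [mul_le_mul_of_nonneg_right hma hw.le]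
  have haub : |a| ≤ w * (2 ^ p - 1) := by
    rw [habs]; linarith only [mul_le_mul_of_nonneg_right hmb hw.le]
  -- x₁ = (2^s+1) a
  set x₁ : ℝ := ((2:ℝ) ^ s + 1) * a with hx1def
  have h2s : (0:ℝ) < 2 ^ s + 1 := by positivity
  have hax1 : |x₁| = (2 ^ s + 1) * |a| := by rw [hx1def, abs_mul, abs_of_pos h2s]
  have hub1 : |x₁| ≤ w * 2 ^ (s+p+1) := by
    rw [hax1, pw1]
    have h := mul_le_mul_of_nonneg_left haub h2s.le
    have keyp : ((2:ℝ) ^ s + 1) * (2 ^ p - 1) ≤ 2 ^ s * 2 ^ p * 2 := by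
      linarith only [mul_le_mul_of_nonneg_right h1s hp0.le, h1s, h1p]
    have key := mul_le_mul_of_nonneg_left keyp hw.le
    linarith only [h, key]
  have hlb1 : w * 2 ^ (s+p-1) ≤ |x₁| := by
    rw [hax1, pw2]
    have h := mul_le_mul_of_nonneg_left halb h2s.le
    linarith only [h, (mul_pos hw (pow_pos (show (0:ℝ) < 2 by norm_num) (p-1))).le]
  -- exponent rewrites
  have hpowE1 : (2:ℝ) ^ (e + (s:ℤ) + 1) = w * 2 ^ (s+1) := by
    rw [show e + (s:ℤ) + 1 = e + ((s+1:ℕ):ℤ) by push_cast; ring, hsplit]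
  have hpowEP : (2:ℝ) ^ (e + (s:ℤ) + 1 + (p:ℤ)) = w * 2 ^ (s+p+1) := by
    rw [show e + (s:ℤ) + 1 + (p:ℤ) = e + ((s+p+1:ℕ):ℤ) by push_cast; ring, hsplit]
  have hpowEs : (2:ℝ) ^ (e + (s:ℤ)) = w * 2 ^ s := hsplit s
  have hpowE0 : (2:ℝ) ^ (e + (s:ℤ) - 1) = w * 2 ^ (s-1) := by
    rw [show e + (s:ℤ) - 1 = e + ((s-1:ℕ):ℤ) by omega, hsplit]
  -- cell around x₁
  have hcx : c = fl x₁ := hc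
  obtain ⟨A1, B1, hA1x, hxB1, hgap1, hA1c, hcB1⟩ :=
    cell hp1 hfl x₁ (e + (s:ℤ) + 1) (by rw [hpowEP]; linarith only [hub1])
  rw [← hcx] at hA1c hcB1
  rw [hpowE1] at hgap1
  have hd1 : |c - x₁| ≤ w * 2 ^ (s+1) :=
    abs_le.mpr ⟨by linarith only [hgap1, hA1c, hxB1], by linarith only [hgap1, hcB1, hA1x]⟩
  -- lower bound on |c|
  have hybF := Fp.pow2_mem hp1 (e + ((s+p-1:ℕ):ℤ))
  have hB0F := Fp.pow2_mem hp1 (e + ((s+p+1:ℕ):ℤ))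
  have hyv : (2:ℝ) ^ (e + ((s+p-1:ℕ):ℤ)) = w * 2 ^ (s+p-1) := hsplit _
  have hB0v : (2:ℝ) ^ (e + ((s+p+1:ℕ):ℤ)) = w * 2 ^ (s+p+1) := hsplit _
  have hclb : w * 2 ^ (s+p-1) ≤ |c| := by
    rw [hcx]
    have := abs_lb hfl hybF (by rw [hyv]; positivity)
      (by rw [hyv]; linarith only [hlb1]) (by rw [hB0v]; linarith only [hub1]) hB0F
    rwa [hyv] at this
  have hcF : c ∈ Fp p := by rw [hcx]; exact hfl.1 x₁
  obtain ⟨kc, hkc⟩ := Fp.isMultiple hcF (e + (s:ℤ)) (by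
    rw [show e + (s:ℤ) + (p:ℤ) - 1 = e + ((s+p-1:ℕ):ℤ) by omega, hyv]
    exact hclb)
  -- x₂ = c - a
  set x₂ : ℝ := c - a with hx2def
  have hbx : a_big = fl x₂ := hbig
  have hx2eq : x₂ = 2 ^ s * a + (c - x₁) := by rw [hx2def, hx1def]; ring
  have htri : 2 ^ s * |a| ≤ |x₂| + |c - x₁| := by
    have h := abs_add_le x₂ (-(c - x₁))
    rw [abs_neg] at h
    have h2 : |(2:ℝ) ^ s * a| = 2 ^ s * |a| := by rw [abs_mul, abs_of_pos hs0]
    have h3 : (2:ℝ) ^ s * a = x₂ + -(c - x₁) := by rw [hx2eq]; ring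
    rw [← h2, h3]
    exact h
  have hub2 : |x₂| ≤ w * 2 ^ (s+p+1) := by
    have h1 : |x₂| ≤ 2 ^ s * |a| + |c - x₁| := by
      rw [hx2eq]
      refine (abs_add_le _ _).trans ?_
      rw [abs_mul, abs_of_pos hs0]
    have h4 : 2 ^ s * |a| ≤ 2 ^ s * (w * (2 ^ p - 1)) := mul_le_mul_of_nonneg_left haub hs0.le
    have keyp : (2:ℝ) ^ s * (2 ^ p - 1) + 2 ^ (s+1) ≤ 2 ^ s * 2 ^ p * 2 := by
      have e2 : (2:ℝ) ^ (s+1) = 2 ^ s * 2 := by rw [pow_succ]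
      linarith only [e2, mul_le_mul_of_nonneg_left h1p hs0.le]
    have key := mul_le_mul_of_nonneg_left keyp hw.le
    have hgoal : w * 2 ^ (s+p+1) = w * (2 ^ s * 2 ^ p * 2) := by rw [pw1]
    linarith only [h1, h4, hd1, key, hgoal]
  have hlb2 : w * 2 ^ (s+p-1) - w * 2 ^ (s+1) ≤ |x₂| := by
    have h4 : 2 ^ s * (w * 2 ^ (p-1)) ≤ 2 ^ s * |a| := mul_le_mul_of_nonneg_left halb hs0.le
    have h5 : w * 2 ^ (s+p-1) = 2 ^ s * (w * 2 ^ (p-1)) := by rw [pw2]; ring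
    linarith only [htri, hd1, h4, h5]
  -- cell around x₂
  obtain ⟨A2, B2, hA2x, hxB2, hgap2, hA2b, hbB2⟩ :=
    cell hp1 hfl x₂ (e + (s:ℤ) + 1) (by rw [hpowEP]; linarith only [hub2])
  rw [← hbx] at hA2b hbB2
  rw [hpowE1] at hgap2
  have hd2 : |a_big - x₂| ≤ w * 2 ^ (s+1) :=
    abs_le.mpr ⟨by linarith only [hgap2, hA2b, hxB2], by linarith only [hgap2, hbB2, hA2x]⟩
  -- lower bound on |a_big|
  have hkint : |(2:ℤ) ^ (p-2) - 1| ≤ 2 ^ p := by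
    have h1 : (2:ℤ) ^ (p-2) ≤ 2 ^ p := pow_le_pow_right₀ one_le_two (by omega)
    have h2 : (0:ℤ) < 2 ^ (p-2) := pow_pos (by norm_num) _
    rw [abs_of_nonneg (by omega)]
    omega
  have hyF2 : (((2:ℤ) ^ (p-2) - 1 : ℤ) : ℝ) * 2 ^ (e + (s:ℤ) + 1) ∈ Fp p :=
    Fp.scaled_int_mem hp1 _ hkint
  have hyv2 : (((2:ℤ) ^ (p-2) - 1 : ℤ) : ℝ) * 2 ^ (e + (s:ℤ) + 1)
      = w * 2 ^ (s+p-1) - w * 2 ^ (s+1) := by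
    push_cast
    rw [hpowE1, pw3]
    ring
  have hsp1 : (0:ℝ) < 2 ^ (s+1) := by positivity
  have hmono1 : (2:ℝ) ^ (s+1) ≤ 2 ^ (s+p-1) := pow_le_pow_right₀ one_le_two (by omega)
  have hblb : w * 2 ^ (s+p-1) - w * 2 ^ (s+1) ≤ |a_big| := by
    rw [hbx]
    have := abs_lb hfl hyF2
      (by rw [hyv2]; linarith only [mul_le_mul_of_nonneg_left hmono1 hw.le])
      (by rw [hyv2]; exact hlb2) (by rw [hB0v]; linarith only [hub2]) hB0F
    rwa [hyv2] at this
  have hblb2 : w * 2 ^ (s+p-2) ≤ |a_big| := by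
    have hk : (2:ℝ) ^ (p-2) = 2 ^ (p-3) * 2 := by rw [← pow_succ]; congr 1; omega
    have key : (2:ℝ) ^ (p-3) + 1 ≤ 2 ^ (p-2) := by rw [hk]; linarith only [pw0]
    have h6 := mul_le_mul_of_nonneg_left key (mul_pos hw hsp1).le
    rw [pw4]
    rw [pw3] at hblb
    linarith only [hblb, h6]
  have hbF : a_big ∈ Fp p := by rw [hbx]; exact hfl.1 x₂
  obtain ⟨kb, hkb⟩ := Fp.isMultiple hbF (e + (s:ℤ) - 1) (by
    rw [show e + (s:ℤ) - 1 + (p:ℤ) - 1 = e + ((s+p-2:ℕ):ℤ) by omega, hsplit]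
    exact hblb2)
  -- Part 1 : c - a_big ∈ Fp
  have hdiffeq : c - a_big = ((2 * kc - kb : ℤ) : ℝ) * 2 ^ (e + (s:ℤ) - 1) := by
    rw [hkc, hkb]
    push_cast
    have h2 : (2:ℝ) ^ (e + (s:ℤ)) = 2 ^ (e + (s:ℤ) - 1) * 2 := by
      rw [← zpow_add_one₀ two_ne_zero]; congr 1; ring
    rw [h2]; ring
  have hdub : |c - a_big| ≤ w * 2 ^ (s+p-1) := by
    have h1 : c - a_big = a + (a_big - x₂) * (-1) := by rw [hx2def]; ring
    have h2 : |c - a_big| ≤ |a| + |a_big - x₂| := by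
      rw [h1]
      refine (abs_add_le _ _).trans ?_
      rw [abs_mul, abs_neg, abs_one, mul_one]
    have key : (2:ℝ) ^ p - 1 + 2 ^ (s+1) ≤ 2 ^ (s+p-1) := by
      rw [pw5, pw6]
      linarith only [pw7, pw8, mul_nonneg (sub_nonneg.2 pw8) (sub_nonneg.2 pw7)]
    have h3 := mul_le_mul_of_nonneg_left key hw.le
    linarith only [haub, hd2, h2, h3]
  have hK1b : |2 * kc - kb| ≤ 2 ^ p := by
    apply int_bound p (t := w * 2 ^ (s-1)) (by positivity)
    have h1 : |((2 * kc - kb : ℤ) : ℝ)| * (w * 2 ^ (s-1)) = |c - a_big| := by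
      rw [hdiffeq, abs_mul, abs_of_pos (zpow_pos (show (0:ℝ) < 2 by norm_num) _), hpowE0]
    rw [h1]
    have h2 : (2:ℝ) ^ p * (w * 2 ^ (s-1)) = w * 2 ^ (s+p-1) := by rw [pw5]; ring
    linarith only [hdub, h2]
  have hmem1 : c - a_big ∈ Fp p := by
    rw [hdiffeq]; exact Fp.scaled_int_mem hp1 _ hK1b
  have hhi' : a_hi = c - a_big := by rw [hhi]; exact hfl.2.1 _ hmem1
  -- Part 2 : a - a_hi ∈ Fp
  have hnum : a - a_hi = ((m - kc * 2 ^ s + kb * 2 ^ (s-1) : ℤ) : ℝ) * w := by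
    rw [hhi', hae, hkc, hkb]
    push_cast
    rw [hpowEs, hpowE0]
    ring
  have hab2 : |a - a_hi| ≤ w * 2 ^ (s+1) := by
    have h1 : a - a_hi = a_big - x₂ := by rw [hhi', hx2def]; ring
    rw [h1]; exact hd2
  have hK2b : |m - kc * 2 ^ s + kb * 2 ^ (s-1)| ≤ 2 ^ p := by
    apply int_bound p (t := w) hw
    have h1 : |((m - kc * 2 ^ s + kb * 2 ^ (s-1) : ℤ) : ℝ)| * w = |a - a_hi| := by
      rw [hnum, abs_mul, abs_of_pos hw]
    rw [h1]
    linarith only [hab2, mul_le_mul_of_nonneg_left pw9 hw.le]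
  have hmem2 : a - a_hi ∈ Fp p := by
    rw [hnum, hwdef]
    exact Fp.scaled_int_mem hp1 e hK2b
  exact ⟨⟨hmem1, hhi'⟩, hmem2, hfl.2.1 _ hmem2⟩
end

section
/- Representability of the multiplication rounding error: Let p ≥ 2 be an integer, let fl be a faithful rounding to F_p, and let a, b ∈ F_p. Then the rounding error of the hardware multiplication is itself a p-bit floating-point number: a·b − fl(a·b) ∈ F_p. -/
lemma mem_Fp_of_abs_le (p : ℕ) (hp : 1 ≤ p) (k e : ℤ) (hk : |k| ≤ 2 ^ p) :
    ((k : ℝ) * 2 ^ e) ∈ Fp p := by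
  rcases lt_or_eq_of_le hk with h | h
  · exact ⟨k, e, h, rfl⟩
  · have h2 : |(2:ℤ) ^ (p-1)| < 2 ^ p := by
      rw [abs_of_nonneg (by positivity)]
      exact pow_lt_pow_right₀ one_lt_two (by omega)
    have hpow : (2:ℝ) ^ (e + 1) = 2 ^ e * 2 := by
      rw [zpow_add_one₀ (by norm_num : (2:ℝ) ≠ 0)]
    have hps : ((2:ℝ)) ^ (p - 1) * 2 = 2 ^ p := by
      rw [← pow_succ]
      congr 1
      omega
    rcases (abs_eq (by positivity : (0:ℤ) ≤ 2 ^ p)).mp h with hk' | hk'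
    · refine ⟨2 ^ (p-1), e + 1, h2, ?_⟩
      subst hk'
      push_cast
      rw [hpow, ← hps]; ring
    · refine ⟨-(2 ^ (p-1)), e + 1, by simpa using h2, ?_⟩
      subst hk'
      push_cast
      rw [hpow, ← hps]; ring

lemma eq_int_mul (p : ℕ) (n f e : ℤ) (hn : |n| < 2 ^ p)
    (h : (2:ℝ) ^ e * 2 ^ p ≤ |(n : ℝ) * 2 ^ f|) :
    ∃ k : ℤ, (n : ℝ) * 2 ^ f = (k : ℝ) * 2 ^ e := by
  have hfe : e ≤ f := by
    by_contra hlt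
    push_neg at hlt
    have hf1 : (2:ℝ) ^ f ≤ 2 ^ (e - 1) := by
      apply zpow_le_zpow_right₀ one_le_two
      omega
    have hnn : |(n:ℝ)| < 2 ^ p := by
      rw [← Int.cast_abs]
      exact_mod_cast lt_of_lt_of_le hn (le_refl _)
    have : |(n : ℝ) * 2 ^ f| < 2 ^ e * 2 ^ p := by
      rw [abs_mul, abs_of_nonneg (by positivity : (0:ℝ) ≤ (2:ℝ) ^ f)]
      calc |(n:ℝ)| * 2 ^ f ≤ |(n:ℝ)| * 2 ^ (e-1) := by
            apply mul_le_mul_of_nonneg_left hf1 (abs_nonneg _)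
        _ < 2 ^ p * 2 ^ (e-1) := by
            apply mul_lt_mul_of_pos_right hnn (by positivity)
        _ < 2 ^ e * 2 ^ p := by
            rw [mul_comm]
            apply mul_lt_mul_of_pos_right _ (by positivity)
            apply zpow_lt_zpow_right₀ one_lt_two
            omega
    linarith
  refine ⟨n * 2 ^ (f - e).toNat, ?_⟩
  push_cast
  rw [mul_assoc]
  congr 1
  rw [← zpow_natCast (2:ℝ) (f-e).toNat, Int.toNat_of_nonneg (by omega),
    ← zpow_add₀ (by norm_num : (2:ℝ) ≠ 0)]
  congr 1
  omega

set_option maxHeartbeats 1000000 in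
/-- With a faithful rounding, the rounding error of a hardware multiplication
of two `p`-bit floats is itself a `p`-bit float. -/
theorem mul_error_representable (p : ℕ) (hp : 2 ≤ p)
    (fl : ℝ → ℝ) (hfl : FaithfulRounding p fl)
    (a b : ℝ) (ha : a ∈ Fp p) (hb : b ∈ Fp p) :
    a * b - fl (a * b) ∈ Fp p := by
  obtain ⟨hmem, hfix, hrnd⟩ := hfl
  obtain ⟨ma, ea, hma, rfl⟩ := ha
  obtain ⟨mb, eb, hmb, rfl⟩ := hb
  set M : ℤ := ma * mb with hMdef
  set E : ℤ := ea + eb with hEdef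
  have hab : (ma:ℝ) * 2 ^ ea * ((mb:ℝ) * 2 ^ eb) = (M:ℝ) * 2 ^ E := by
    rw [hMdef, hEdef, zpow_add₀ (by norm_num : (2:ℝ) ≠ 0)]
    push_cast
    ring
  rw [hab]
  by_cases hx : (M:ℝ) * 2 ^ E ∈ Fp p
  · rw [hfix _ hx]
    exact ⟨0, 0, by simpa using pow_pos (by norm_num : (0:ℤ) < 2) p, by simp⟩
  have h2p : (0:ℤ) < 2 ^ p := by positivity
  have h2E : (0:ℝ) < 2 ^ E := by positivity
  have hEp : (2:ℝ) ^ (E + (p:ℤ)) = 2 ^ E * 2 ^ p := by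
    rw [zpow_add₀ (by norm_num : (2:ℝ) ≠ 0), zpow_natCast]
  have hMlb : 2 ^ p ≤ |M| := by
    by_contra hlt
    push_neg at hlt
    exact hx ⟨M, E, hlt, rfl⟩
  have hMub : |M| < 2 ^ p * 2 ^ p := by
    calc |M| = |ma| * |mb| := abs_mul ma mb
      _ < 2 ^ p * 2 ^ p :=
        mul_lt_mul'' hma hmb (abs_nonneg _) (abs_nonneg _)
  set q : ℤ := M / 2 ^ p with hqdef
  set r : ℤ := M % 2 ^ p with hrdef
  have hMqr : 2 ^ p * q + r = M := Int.mul_ediv_add_emod M (2 ^ p)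
  have hr0 : 0 ≤ r := Int.emod_nonneg M (by positivity)
  have hrlt : r < 2 ^ p := Int.emod_lt_of_pos M h2p
  have hMabs := abs_lt.mp hMub
  have hqlt : q < 2 ^ p := by
    by_contra h
    push_neg at h
    have : 2 ^ p * 2 ^ p ≤ 2 ^ p * q := mul_le_mul_of_nonneg_left h h2p.le
    linarith
  have hqge : -2 ^ p ≤ q := by
    by_contra h
    push_neg at h
    have : 2 ^ p * q ≤ 2 ^ p * (-2 ^ p - 1) :=
      mul_le_mul_of_nonneg_left (by omega) h2p.le
    nlinarith
  have hqabs : |q| ≤ 2 ^ p := abs_le.mpr ⟨hqge, hqlt.le⟩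
  have hr1 : 1 ≤ r := by
    rcases lt_or_eq_of_le hr0 with h | h
    · omega
    · exfalso
      apply hx
      have hMq : (M:ℝ) * 2 ^ E = (q:ℝ) * 2 ^ (E + (p:ℤ)) := by
        rw [hEp]
        have hM2 : M = 2 ^ p * q := by omega
        rw [hM2]
        push_cast
        ring
      rw [hMq]
      exact mem_Fp_of_abs_le p (by omega) q (E + p) hqabs
  have hMr : (M:ℝ) = 2 ^ p * (q:ℝ) + (r:ℝ) := by exact_mod_cast hMqr.symm
  have hcFp : ((q:ℝ) * 2 ^ (E + (p:ℤ))) ∈ Fp p := mem_Fp_of_abs_le p (by omega) q _ hqabs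
  have hc'Fp : (((q:ℝ) + 1) * 2 ^ (E + (p:ℤ))) ∈ Fp p := by
    have := mem_Fp_of_abs_le p (by omega) (q + 1) (E + p) (abs_le.mpr ⟨by omega, by omega⟩)
    push_cast at this
    exact this
  have hcle : (q:ℝ) * 2 ^ (E + (p:ℤ)) ≤ (M:ℝ) * 2 ^ E := by
    rw [hEp, hMr]
    have : (0:ℝ) ≤ (r:ℝ) := by exact_mod_cast hr0
    nlinarith
  have hlec' : (M:ℝ) * 2 ^ E ≤ ((q:ℝ) + 1) * 2 ^ (E + (p:ℤ)) := by
    rw [hEp, hMr]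
    have h1 : (r:ℝ) ≤ 2 ^ p := by exact_mod_cast hrlt.le
    nlinarith
  have hsand : (q:ℝ) * 2 ^ (E + (p:ℤ)) ≤ fl ((M:ℝ) * 2 ^ E) ∧
      fl ((M:ℝ) * 2 ^ E) ≤ ((q:ℝ) + 1) * 2 ^ (E + (p:ℤ)) := by
    rcases hrnd ((M:ℝ) * 2 ^ E) with hG | hL
    · exact ⟨hG.2 ⟨hcFp, hcle⟩, le_trans hG.1.2 hlec'⟩
    · exact ⟨le_trans hcle hL.1.2, hL.2 ⟨hc'Fp, hlec'⟩⟩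
  have hrR : (r:ℝ) < 2 ^ p := by exact_mod_cast hrlt
  have hrR1 : (1:ℝ) ≤ (r:ℝ) := by exact_mod_cast hr1
  have herr : |(M:ℝ) * 2 ^ E - fl ((M:ℝ) * 2 ^ E)| < 2 ^ E * 2 ^ p := by
    rw [abs_sub_lt_iff]
    constructor
    · have : (M:ℝ) * 2 ^ E - (q:ℝ) * 2 ^ (E + (p:ℤ)) = (r:ℝ) * 2 ^ E := by
        rw [hEp, hMr]; ring
      nlinarith [hsand.1]
    · have : ((q:ℝ) + 1) * 2 ^ (E + (p:ℤ)) - (M:ℝ) * 2 ^ E = (2 ^ p - (r:ℝ)) * 2 ^ E := by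
        rw [hEp, hMr]; ring
      nlinarith [hsand.2]
  have hbig : 2 ^ E * 2 ^ p ≤ |fl ((M:ℝ) * 2 ^ E)| := by
    rcases le_or_gt (2 ^ p) M with hMpos | hMneg
    · have hq1 : 1 ≤ q := by
        by_contra h
        push_neg at h
        have : 2 ^ p * q ≤ 0 := mul_nonpos_of_nonneg_of_nonpos h2p.le (by omega)
        linarith
      have hq1R : (1:ℝ) ≤ (q:ℝ) := by exact_mod_cast hq1
      have : 2 ^ E * 2 ^ p ≤ (q:ℝ) * 2 ^ (E + (p:ℤ)) := by
        rw [hEp]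
        nlinarith
      calc 2 ^ E * 2 ^ p ≤ (q:ℝ) * 2 ^ (E + (p:ℤ)) := this
        _ ≤ fl ((M:ℝ) * 2 ^ E) := hsand.1
        _ ≤ |fl ((M:ℝ) * 2 ^ E)| := le_abs_self _
    · have hMle : M ≤ -2 ^ p := by
        rcases abs_le.mp (le_of_eq rfl : |M| ≤ |M|) with _
        have := hMlb
        rcases abs_cases M with ⟨h1, h2⟩ | ⟨h1, h2⟩ <;> omega
      have hq2 : q ≤ -2 := by
        by_contra h
        push_neg at h
        have : 2 ^ p * (-1) ≤ 2 ^ p * q := mul_le_mul_of_nonneg_left (by omega) h2p.le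
        linarith
      have hq2R : (q:ℝ) + 1 ≤ -1 := by
        have : (q:ℝ) ≤ -2 := by exact_mod_cast hq2
        linarith
      have hc'neg : ((q:ℝ) + 1) * 2 ^ (E + (p:ℤ)) ≤ -(2 ^ E * 2 ^ p) := by
        rw [hEp]
        nlinarith
      calc 2 ^ E * 2 ^ p ≤ -fl ((M:ℝ) * 2 ^ E) := by linarith [hsand.2]
        _ ≤ |fl ((M:ℝ) * 2 ^ E)| := neg_le_abs _
  obtain ⟨n, f, hn, hFeq⟩ := hmem ((M:ℝ) * 2 ^ E)
  obtain ⟨k, hk⟩ := eq_int_mul p n f E hn (by rw [← hFeq]; exact hbig)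
  have hkerr : (M:ℝ) * 2 ^ E - fl ((M:ℝ) * 2 ^ E) = ((M - k : ℤ):ℝ) * 2 ^ E := by
    rw [hFeq, hk]
    push_cast
    ring
  refine ⟨M - k, E, ?_, hkerr⟩
  have hlt : |((M - k : ℤ):ℝ)| < 2 ^ p := by
    have h1 : |((M - k : ℤ):ℝ)| * 2 ^ E < 2 ^ E * 2 ^ p := by
      calc |((M - k : ℤ):ℝ)| * 2 ^ E = |((M - k : ℤ):ℝ) * 2 ^ E| := by
            rw [abs_mul, abs_of_pos h2E]
        _ = |(M:ℝ) * 2 ^ E - fl ((M:ℝ) * 2 ^ E)| := by rw [hkerr]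
        _ < 2 ^ E * 2 ^ p := herr
    rw [mul_comm ((2:ℝ) ^ E)] at h1
    exact lt_of_mul_lt_mul_right h1 h2E.le
  have := hlt
  rw [← Int.cast_abs] at this
  exact_mod_cast this
end
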